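/- With d₀ as above, for every m > 0 and R > 0 there exist constants C_{m,R}, C̃_{m,R} > 0 such that for every (θ,u) ∈ [−m,m] × X and r ∈ (0,R]: (a) d_{ℝ×X}((θ,u),(θ₁,u₁)) ≤ C_{m,R} d₀((θ,u),(θ₁,u₁)) for all (θ₁,u₁) in the d₀-ball of radius r around (θ,u), and (b) d₀((θ,u),(θ₁,u₁)) ≤ C̃_{m,R} d_{ℝ×X}((θ,u),(θ₁,u₁)) for all (θ₁,u₁) in the d_{ℝ×X}-ball of radius C̃_{m,R}^{-1} r around (θ,u). Here d_{ℝ×X}((θ₁,u₁),(θ₂,u₂)) := |θ₁−θ₂| + ‖u₁−u₂‖_X. -/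

import Mathlib

open MeasureTheory Filter

/-- Length of a path `σ : [0,1] → ℝ × X` with respect to the moving norms
`‖(θ̃,ũ)‖_{(θ,u)} = (θ̃² + ‖T_θ ũ‖²)^{1/2}`. -/
noncomputable def pathLen {X : Type*} [NormedAddCommGroup X] [NormedSpace ℝ X]
    (T : ℝ → X →L[ℝ] X) (σ : ℝ → ℝ × X) : ℝ :=
  ∫ τ in (0:ℝ)..1,
    Real.sqrt ((deriv σ τ).1 ^ 2 + ‖T ((σ τ).1) (deriv σ τ).2‖ ^ 2)

/-- The length metric `d₀` on `ℝ × X` from the paper. -/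
noncomputable def d0 {X : Type*} [NormedAddCommGroup X] [NormedSpace ℝ X]
    (T : ℝ → X →L[ℝ] X) (p q : ℝ × X) : ℝ :=
  sInf { L : ℝ | ∃ σ : ℝ → ℝ × X, ContDiffOn ℝ 1 σ (Set.Icc 0 1) ∧
      σ 0 = p ∧ σ 1 = q ∧ L = pathLen T σ }

/-!
By Banach–Steinhaus, `‖T s‖ ≤ K` for `|s| ≤ m + R`, and the group law gives
`‖v‖ ≤ ‖T (-s)‖ ‖T s v‖ ≤ K ‖T s v‖` there. A `C¹` path from `(θ, u)` of `d₀`-length `L < R`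
keeps its first coordinate within `L` of `θ`, so along it the moving norm dominates both `|θ̃|`
and `‖ũ‖ / K`; integrating gives `|Δθ| + ‖Δu‖ ≤ (1 + K) L`, and taking the infimum over paths
gives (a). For (b), the straight segment has length at most `|Δθ| + K ‖Δu‖` as soon as
`|Δθ| ≤ R`. Strong continuity together with these local bounds makes `(θ, v) ↦ T θ v` jointly
continuous, which is what makes the length integrand integrable.
-/

open Set

section StronglyContinuous

variable {α 𝕜 E F : Type*} [TopologicalSpace α] [NontriviallyNormedField 𝕜]
  [NormedAddCommGroup E] [NormedSpace 𝕜 E] [NormedAddCommGroup F] [NormedSpace 𝕜 F]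
  [CompleteSpace E] {T : α → E →L[𝕜] F}

theorem IsCompact.exists_bound_of_strongly_continuousOn {s : Set α} (hs : IsCompact s)
    (hT : ∀ v, ContinuousOn (fun x => T x v) s) : ∃ K, ∀ x ∈ s, ‖T x‖ ≤ K := by
  obtain ⟨K, hK⟩ := banach_steinhaus (g := fun x : s => T x) fun v =>
    (hs.exists_bound_of_continuousOn (hT v)).imp fun C hC x => hC x x.2
  exact ⟨K, fun x hx => hK ⟨x, hx⟩⟩

theorem continuous_uncurry_of_strongly_continuous [WeaklyLocallyCompactSpace α]
    (hT : ∀ v, Continuous fun x => T x v) : Continuous fun p : α × E => T p.1 p.2 := by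
  refine continuous_iff_continuousAt.2 fun ⟨x₀, _⟩ => ?_
  obtain ⟨s, hs, hsx₀⟩ := exists_compact_mem_nhds x₀
  obtain ⟨K, hK⟩ := hs.exists_bound_of_strongly_continuousOn fun v => (hT v).continuousOn
  have hlip : ∀ x ∈ s, LipschitzOnWith K.toNNReal (T x) univ := fun x hx =>
    ((T x).lipschitz.weaken (by simpa using Real.toNNReal_le_toNNReal (hK x hx))).lipschitzOnWith
  exact (continuousOn_prod_of_continuousOn_lipschitzOnWith' _ _ hlip
    fun v _ => (hT v).continuousOn).continuousAt (prod_mem_nhds hsx₀ univ_mem)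

end StronglyContinuous

section Group

variable {G 𝕜 E : Type*} [AddGroup G] [NontriviallyNormedField 𝕜] [NormedAddCommGroup E]
  [NormedSpace 𝕜 E] {T : G → E →L[𝕜] E}

theorem apply_neg_apply (hT0 : T 0 = ContinuousLinearMap.id 𝕜 E)
    (hTadd : ∀ s t, T (s + t) = (T s).comp (T t)) (s : G) (v : E) : T (-s) (T s v) = v := by
  rw [← ContinuousLinearMap.comp_apply, ← hTadd, neg_add_cancel, hT0, ContinuousLinearMap.id_apply]

theorem norm_le_mul_norm_apply (hT0 : T 0 = ContinuousLinearMap.id 𝕜 E)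
    (hTadd : ∀ s t, T (s + t) = (T s).comp (T t)) {s : G} {K : ℝ} (hK : ‖T (-s)‖ ≤ K) (v : E) :
    ‖v‖ ≤ K * ‖T s v‖ :=
  calc ‖v‖ = ‖T (-s) (T s v)‖ := by rw [apply_neg_apply hT0 hTadd]
    _ ≤ ‖T (-s)‖ * ‖T s v‖ := (T (-s)).le_opNorm _
    _ ≤ K * ‖T s v‖ := by gcongr

end Group

section Prod

variable {E F : Type*} [NormedAddCommGroup E] [NormedSpace ℝ E] [NormedAddCommGroup F]
  [NormedSpace ℝ F]

theorem HasDerivAt.fst {f : ℝ → E × F} {f' : E × F} {x : ℝ} (h : HasDerivAt f f' x) :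
    HasDerivAt (fun t => (f t).1) f'.1 x :=
  (ContinuousLinearMap.fst ℝ E F).hasFDerivAt.comp_hasDerivAt x h

theorem HasDerivAt.snd {f : ℝ → E × F} {f' : E × F} {x : ℝ} (h : HasDerivAt f f' x) :
    HasDerivAt (fun t => (f t).2) f'.2 x :=
  (ContinuousLinearMap.snd ℝ E F).hasFDerivAt.comp_hasDerivAt x h

end Prod

section Path

variable {X : Type*} [NormedAddCommGroup X] [NormedSpace ℝ X] {T : ℝ → X →L[ℝ] X}
  {σ : ℝ → ℝ × X}

noncomputable def speed (T : ℝ → X →L[ℝ] X) (σ : ℝ → ℝ × X) (τ : ℝ) : ℝ :=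
  √((deriv σ τ).1 ^ 2 + ‖T (σ τ).1 (deriv σ τ).2‖ ^ 2)

theorem pathLen_eq_integral_speed : pathLen T σ = ∫ τ in (0:ℝ)..1, speed T σ τ := rfl

theorem speed_nonneg (τ : ℝ) : 0 ≤ speed T σ τ := Real.sqrt_nonneg _

theorem abs_deriv_fst_le_speed (τ : ℝ) : |(deriv σ τ).1| ≤ speed T σ τ :=
  Real.abs_le_sqrt (le_add_of_nonneg_right (sq_nonneg _))

theorem norm_apply_deriv_snd_le_speed (τ : ℝ) : ‖T (σ τ).1 (deriv σ τ).2‖ ≤ speed T σ τ := by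
  rw [← abs_norm]
  exact Real.abs_le_sqrt (le_add_of_nonneg_left (sq_nonneg _))

theorem speed_le_abs_add_norm (τ : ℝ) :
    speed T σ τ ≤ |(deriv σ τ).1| + ‖T (σ τ).1 (deriv σ τ).2‖ := by
  refine Real.sqrt_le_iff.2 ⟨by positivity, ?_⟩
  nlinarith [sq_abs (deriv σ τ).1, abs_nonneg (deriv σ τ).1, norm_nonneg (T (σ τ).1 (deriv σ τ).2)]

theorem pathLen_nonneg : 0 ≤ pathLen T σ :=
  intervalIntegral.integral_nonneg zero_le_one fun τ _ => speed_nonneg τ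

theorem d0_le_pathLen (hσ : ContDiffOn ℝ 1 σ (Icc 0 1)) : d0 T (σ 0) (σ 1) ≤ pathLen T σ :=
  csInf_le ⟨0, by rintro _ ⟨σ', -, -, -, rfl⟩; exact pathLen_nonneg⟩ ⟨σ, hσ, rfl, rfl, rfl⟩

/-- `speed` uses `deriv σ`, which carries junk values at the endpoints; on `(0, 1)` it agrees
with the one-sided derivative `derivWithin σ (Icc 0 1)`, which is continuous on `[0, 1]`. -/
theorem intervalIntegrable_speed (hT : Continuous fun p : ℝ × X => T p.1 p.2)
    (hσ : ContDiffOn ℝ 1 σ (Icc 0 1)) : IntervalIntegrable (speed T σ) volume 0 1 := by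
  set σ' := derivWithin σ (Icc 0 1)
  have hσ' : ContinuousOn σ' (Icc 0 1) :=
    hσ.continuousOn_derivWithin (uniqueDiffOn_Icc one_pos) le_rfl
  have hcont : ContinuousOn (fun τ => √((σ' τ).1 ^ 2 + ‖T (σ τ).1 (σ' τ).2‖ ^ 2)) (Icc 0 1) :=
    ((hσ'.fst.pow 2).add
      ((hT.comp_continuousOn (hσ.continuousOn.fst.prodMk hσ'.snd)).norm.pow 2)).sqrt
  refine (hcont.intervalIntegrable_of_Icc zero_le_one).congr_uIoo fun τ hτ => ?_
  rw [uIoo_of_le zero_le_one] at hτ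
  simp only [speed, σ', derivWithin_of_mem_nhds (Icc_mem_nhds hτ.1 hτ.2)]

theorem abs_fst_sub_le_pathLen (hT : Continuous fun p : ℝ × X => T p.1 p.2)
    (hσ : ContDiffOn ℝ 1 σ (Icc 0 1)) {t : ℝ} (ht : t ∈ Icc (0:ℝ) 1) :
    |(σ t).1 - (σ 0).1| ≤ pathLen T σ := by
  have hsub : Icc 0 t ⊆ Icc (0:ℝ) 1 := Icc_subset_Icc_right ht.2
  have hderiv : ∀ τ ∈ Ioo 0 t, |deriv (fun τ => (σ τ).1) τ| ≤ speed T σ τ := fun τ hτ => by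
    have hτ' : τ ∈ Ioo (0:ℝ) 1 := ⟨hτ.1, hτ.2.trans_le ht.2⟩
    rw [((hσ.differentiableOn one_ne_zero).hasDerivAt (Icc_mem_nhds hτ'.1 hτ'.2)).fst.deriv]
    exact abs_deriv_fst_le_speed τ
  calc |(σ t).1 - (σ 0).1| ≤ ∫ τ in (0:ℝ)..t, speed T σ τ :=
        norm_sub_le_integral_of_norm_deriv_le_of_le ht.1 (hσ.continuousOn.fst.mono hsub)
          ((hσ.differentiableOn one_ne_zero).fst.mono (Ioo_subset_Icc_self.trans hsub))
          (ae_of_all _ hderiv) ((intervalIntegrable_speed hT hσ).mono_set (by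
            rwa [uIcc_of_le ht.1, uIcc_of_le zero_le_one]))
    _ ≤ pathLen T σ := intervalIntegral.integral_mono_interval le_rfl ht.1 ht.2
        (ae_of_all _ speed_nonneg) (intervalIntegrable_speed hT hσ)

theorem norm_snd_sub_le_mul_pathLen (hT : Continuous fun p : ℝ × X => T p.1 p.2)
    (hσ : ContDiffOn ℝ 1 σ (Icc 0 1)) {K : ℝ} (hK₀ : 0 ≤ K)
    (hK : ∀ τ ∈ Ioo (0:ℝ) 1, ∀ v, ‖v‖ ≤ K * ‖T (σ τ).1 v‖) :
    ‖(σ 1).2 - (σ 0).2‖ ≤ K * pathLen T σ := by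
  have hderiv : ∀ τ ∈ Ioo (0:ℝ) 1, ‖deriv (fun τ => (σ τ).2) τ‖ ≤ K * speed T σ τ := fun τ hτ => by
    rw [((hσ.differentiableOn one_ne_zero).hasDerivAt (Icc_mem_nhds hτ.1 hτ.2)).snd.deriv]
    exact (hK τ hτ _).trans (mul_le_mul_of_nonneg_left (norm_apply_deriv_snd_le_speed τ) hK₀)
  rw [pathLen_eq_integral_speed, ← intervalIntegral.integral_const_mul]
  exact norm_sub_le_integral_of_norm_deriv_le_of_le zero_le_one hσ.continuousOn.snd
    ((hσ.differentiableOn one_ne_zero).snd.mono Ioo_subset_Icc_self) (ae_of_all _ hderiv)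
    ((intervalIntegrable_speed hT hσ).const_mul K)

theorem pathLen_lineMap_le {p q : ℝ × X} {K : ℝ} (hK : ∀ s ∈ uIcc p.1 q.1, ‖T s‖ ≤ K) :
    pathLen T (AffineMap.lineMap p q) ≤ |q.1 - p.1| + K * ‖q.2 - p.2‖ := by
  have hspeed : ∀ τ ∈ uIoc (0:ℝ) 1,
      ‖speed T (AffineMap.lineMap p q) τ‖ ≤ |q.1 - p.1| + K * ‖q.2 - p.2‖ := by
    intro τ hτ
    rw [uIoc_of_le zero_le_one] at hτ
    have hθ : (AffineMap.lineMap p q τ : ℝ × X).1 ∈ uIcc p.1 q.1 := by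
      rw [AffineMap.fst_lineMap, ← segment_eq_uIcc]
      exact lineMap_mem_segment ℝ _ _ ⟨hτ.1.le, hτ.2⟩
    rw [Real.norm_of_nonneg (speed_nonneg τ)]
    refine (speed_le_abs_add_norm τ).trans ?_
    rw [AffineMap.hasDerivAt_lineMap.deriv]
    exact add_le_add le_rfl (((T _).le_opNorm _).trans
      (mul_le_mul_of_nonneg_right (hK _ hθ) (norm_nonneg _)))
  rw [pathLen_eq_integral_speed]
  simpa using (le_abs_self _).trans (intervalIntegral.norm_integral_le_of_norm_le_const hspeed)

theorem le_mul_d0_of_forall_pathLen_lt {p q : ℝ × X} {c C r : ℝ} (hC : 0 < C)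
    (hr : d0 T p q < r) (h : ∀ σ : ℝ → ℝ × X, ContDiffOn ℝ 1 σ (Icc 0 1) → σ 0 = p → σ 1 = q →
      pathLen T σ < r → c ≤ C * pathLen T σ) :
    c ≤ C * d0 T p q := by
  by_contra! hlt
  have hne : {L | ∃ σ : ℝ → ℝ × X, ContDiffOn ℝ 1 σ (Icc 0 1) ∧ σ 0 = p ∧ σ 1 = q ∧
      L = pathLen T σ}.Nonempty :=
    ⟨_, AffineMap.lineMap p q, (AffineMap.contDiff_lineMap p q).contDiffOn,
      AffineMap.lineMap_apply_zero _ _, AffineMap.lineMap_apply_one _ _, rfl⟩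
  obtain ⟨_, ⟨σ, hσ, h0, h1, rfl⟩, hσlt⟩ :=
    exists_lt_of_csInf_lt hne (lt_min hr ((lt_div_iff₀' hC).2 hlt))
  have hc := h σ hσ h0 h1 (hσlt.trans_le (min_le_left _ _))
  have hσc := (lt_div_iff₀' hC).1 (hσlt.trans_le (min_le_right _ _))
  linarith

theorem abs_fst_sub_add_norm_snd_sub_le_mul_pathLen (hT0 : T 0 = ContinuousLinearMap.id ℝ X)
    (hTadd : ∀ s t, T (s + t) = (T s).comp (T t)) (hT : Continuous fun p : ℝ × X => T p.1 p.2)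
    (hσ : ContDiffOn ℝ 1 σ (Icc 0 1)) {K : ℝ} (hK₀ : 0 ≤ K)
    (hK : ∀ s, |s - (σ 0).1| ≤ pathLen T σ → ‖T (-s)‖ ≤ K) :
    |(σ 1).1 - (σ 0).1| + ‖(σ 1).2 - (σ 0).2‖ ≤ (1 + K) * pathLen T σ := by
  have hfst := abs_fst_sub_le_pathLen hT hσ (right_mem_Icc.2 zero_le_one)
  have hsnd := norm_snd_sub_le_mul_pathLen hT hσ hK₀ fun τ hτ =>
    norm_le_mul_norm_apply hT0 hTadd
      (hK _ (abs_fst_sub_le_pathLen hT hσ (Ioo_subset_Icc_self hτ)))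
  linarith

end Path

/-- local comparison of `d₀` with the product metric
`d_{ℝ×X}((θ₁,u₁),(θ₂,u₂)) = |θ₁−θ₂| + ‖u₁−u₂‖` on `[−m,m] × X`. -/
theorem stmt_4
    {X : Type*} [NormedAddCommGroup X] [NormedSpace ℝ X] [CompleteSpace X]
    (T : ℝ → X →L[ℝ] X)
    (hT0 : T 0 = ContinuousLinearMap.id ℝ X)
    (hTadd : ∀ θ₁ θ₂ : ℝ, T (θ₁ + θ₂) = (T θ₁).comp (T θ₂))
    (hTcont : ∀ u : X, Continuous fun θ : ℝ => T θ u) :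
    ∀ m R : ℝ, 0 < m → 0 < R →
      ∃ C Ct : ℝ, 0 < C ∧ 0 < Ct ∧
        ∀ θ : ℝ, ∀ u : X, |θ| ≤ m → ∀ r : ℝ, 0 < r → r ≤ R →
          (∀ θ₁ : ℝ, ∀ u₁ : X, d0 T (θ, u) (θ₁, u₁) < r →
            |θ - θ₁| + ‖u - u₁‖ ≤ C * d0 T (θ, u) (θ₁, u₁)) ∧
          (∀ θ₁ : ℝ, ∀ u₁ : X, |θ - θ₁| + ‖u - u₁‖ < Ct⁻¹ * r →
            d0 T (θ, u) (θ₁, u₁) ≤ Ct * (|θ - θ₁| + ‖u - u₁‖)) := by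
  intro m R _ _
  have hT := continuous_uncurry_of_strongly_continuous hTcont
  obtain ⟨K, hK⟩ := isCompact_Icc.exists_bound_of_strongly_continuousOn
    (s := Icc (-(m + R)) (m + R)) fun v => (hTcont v).continuousOn
  set K₁ := max K 1
  have hK₁ : 1 ≤ K₁ := le_max_right _ _
  refine ⟨1 + K₁, K₁, by positivity, by positivity, fun θ u hθ r hr hrR => ?_⟩
  have hKθ : ∀ s, |s - θ| ≤ R → ‖T s‖ ≤ K₁ ∧ ‖T (-s)‖ ≤ K₁ := fun s hs => by
    have hs' : |s| ≤ m + R := by linarith [abs_sub_abs_le_abs_sub s θ]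
    exact ⟨(hK s (abs_le.1 hs')).trans (le_max_left _ _),
      (hK (-s) (abs_le.1 (by rwa [abs_neg]))).trans (le_max_left _ _)⟩
  refine ⟨?_, ?_⟩
  · intro θ₁ u₁ hd
    refine le_mul_d0_of_forall_pathLen_lt (by positivity) hd fun σ hσ h0 h1 hσr => ?_
    have := abs_fst_sub_add_norm_snd_sub_le_mul_pathLen hT0 hTadd hT hσ (by positivity)
      fun s hs => (hKθ s (by rw [h0] at hs; linarith)).2
    rwa [h0, h1, abs_sub_comm, norm_sub_rev] at this
  · intro θ₁ u₁ hd
    have hθ₁ : |θ₁ - θ| ≤ R := by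
      have := mul_le_of_le_one_left hr.le (inv_le_one_of_one_le₀ hK₁)
      rw [abs_sub_comm]
      linarith [norm_nonneg (u - u₁)]
    calc d0 T (θ, u) (θ₁, u₁) ≤ pathLen T (AffineMap.lineMap (θ, u) (θ₁, u₁)) := by
          simpa using
            d0_le_pathLen (T := T) (AffineMap.contDiff_lineMap (θ, u) (θ₁, u₁)).contDiffOn
      _ ≤ |θ₁ - θ| + K₁ * ‖u₁ - u‖ :=
          pathLen_lineMap_le fun s hs => (hKθ s ((abs_sub_left_of_mem_uIcc hs).trans hθ₁)).1
      _ ≤ K₁ * (|θ - θ₁| + ‖u - u₁‖) := by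
          rw [abs_sub_comm, norm_sub_rev]
          nlinarith [abs_nonneg (θ - θ₁)]
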